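/- arXiv:1911.08101 — 3 statements merged into one kernel-verified Lean document; each statement's English description precedes it below -/
import Mathlib

section
/- Let A_1, ..., A_m be orthogonal projections (self-adjoint idempotent operators) on a complex inner product space and let ψ be a unit vector. Suppose there are real numbers δ_{ij} ∈ [0,2] such that Re⟨ψ, (A_i A_j + A_j A_i) ψ⟩ ≤ δ_{ij} for all i ≠ j. Then Re⟨ψ, (A_1 + ⋯ + A_m) ψ⟩ ≤ 1 + (Σ_{i<j} δ_{ij})^{1/2}. -/
/-!
Write `S = ∑ i, A i` and `t = re ⟪ψ, S ψ⟫ = ∑ i, ‖A i ψ‖²`. Cauchy–Schwarz gives `t² ≤ ‖S ψ‖²`,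
and expanding `‖∑ i, A i ψ‖²` gives `t` from the diagonal plus the cross terms
`re ⟪ψ, (A i A j + A j A i) ψ⟫ ≤ δ i j` for `i < j`. Hence `t² ≤ t + ∑_{i<j} δ i j`,
which forces `t ≤ 1 + √(∑_{i<j} δ i j)`.
-/

open scoped InnerProductSpace
open RCLike Finset

section
variable {𝕜 E : Type*} [RCLike 𝕜] [NormedAddCommGroup E] [InnerProductSpace 𝕜 E]

theorem norm_sum_sq_eq_sum_norm_sq_add_sum_Ioi {ι : Type*} [Fintype ι] [LinearOrder ι]
    [LocallyFiniteOrderTop ι] [LocallyFiniteOrderBot ι] (v : ι → E) :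
    ‖∑ i, v i‖ ^ 2 =
      ∑ i, ‖v i‖ ^ 2 + ∑ i, ∑ j ∈ Ioi i, (re ⟪v i, v j⟫_𝕜 + re ⟪v j, v i⟫_𝕜) := by
  rw [sum_sum_Ioi_add_eq_sum_sum_off_diag (fun i j => re ⟪v j, v i⟫_𝕜), ← sum_add_distrib,
    ← inner_self_eq_norm_sq (𝕜 := 𝕜), sum_inner, map_sum]
  refine sum_congr rfl fun i _ => ?_
  rw [inner_sum, map_sum, Fintype.sum_eq_add_sum_compl i, inner_self_eq_norm_sq]

theorem sq_re_inner_le_norm_sq_of_norm_eq_one {x : E} (hx : ‖x‖ = 1) (y : E) :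
    (re ⟪x, y⟫_𝕜) ^ 2 ≤ ‖y‖ ^ 2 := by
  refine sq_le_sq.mpr ((abs_re_le_norm _).trans ?_)
  simpa [hx, abs_norm] using norm_inner_le_norm (𝕜 := 𝕜) x y

end

namespace ContinuousLinearMap

variable {𝕜 E : Type*} [RCLike 𝕜] [NormedAddCommGroup E] [InnerProductSpace 𝕜 E] [CompleteSpace E]

theorem inner_comp_apply_of_adjoint_eq_self {A : E →L[𝕜] E} (hA : adjoint A = A)
    (B : E →L[𝕜] E) (x : E) : ⟪x, (A ∘L B) x⟫_𝕜 = ⟪A x, B x⟫_𝕜 := by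
  rw [comp_apply, ← adjoint_inner_left, hA]

theorem re_inner_apply_eq_norm_sq_of_projection {P : E →L[𝕜] E} (hP : P ∘L P = P)
    (hsa : adjoint P = P) (x : E) : re ⟪x, P x⟫_𝕜 = ‖P x‖ ^ 2 := by
  have hPP := inner_comp_apply_of_adjoint_eq_self hsa P x
  rw [hP] at hPP
  rw [hPP, inner_self_eq_norm_sq]

end ContinuousLinearMap

theorem le_one_add_sqrt_of_sq_le_add {t D : ℝ} (h : t ^ 2 ≤ t + D) : t ≤ 1 + √D := by
  rcases le_or_gt t 1 with ht | ht
  · linarith [Real.sqrt_nonneg D]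
  · have : t - 1 ≤ √D := Real.le_sqrt_of_sq_le (by nlinarith)
    linarith

theorem stmt0_general {V : Type*} [NormedAddCommGroup V] [InnerProductSpace ℂ V] [CompleteSpace V]
    {m : ℕ} (A : Fin m → V →L[ℂ] V)
    (hidem : ∀ i, A i ∘L A i = A i)
    (hsa : ∀ i, ContinuousLinearMap.adjoint (A i) = A i)
    (ψ : V) (hψ : ‖ψ‖ = 1)
    (δ : Fin m → Fin m → ℝ)
    (h : ∀ i j, i ≠ j → (⟪ψ, (A i ∘L A j + A j ∘L A i) ψ⟫_ℂ).re ≤ δ i j) :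
    (⟪ψ, (∑ i, A i) ψ⟫_ℂ).re ≤
      1 + Real.sqrt (∑ i, ∑ j ∈ Finset.univ.filter (fun j => i < j), δ i j) := by
  have hexpect : (⟪ψ, (∑ i, A i) ψ⟫_ℂ).re = ∑ i, ‖A i ψ‖ ^ 2 := by
    rw [_root_.sum_apply, inner_sum, Complex.re_sum]
    exact sum_congr rfl fun i _ =>
      ContinuousLinearMap.re_inner_apply_eq_norm_sq_of_projection (hidem i) (hsa i) ψ
  have hcross : ∀ i j, i ≠ j → (⟪A i ψ, A j ψ⟫_ℂ).re + (⟪A j ψ, A i ψ⟫_ℂ).re ≤ δ i j :=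
    fun i j hij => by
      simpa only [add_apply, inner_add_right, Complex.add_re,
        ContinuousLinearMap.inner_comp_apply_of_adjoint_eq_self (hsa _)] using h i j hij
  have hnorm : ‖(∑ i, A i) ψ‖ ^ 2 ≤
      ∑ i, ‖A i ψ‖ ^ 2 + ∑ i, ∑ j ∈ Finset.univ.filter (fun j => i < j), δ i j := by
    rw [_root_.sum_apply, norm_sum_sq_eq_sum_norm_sq_add_sum_Ioi (𝕜 := ℂ)]
    simp only [re_to_complex, filter_lt_eq_Ioi]
    gcongr with i _ j hj
    exact hcross i j (mem_Ioi.mp hj).ne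
  have hcs := sq_re_inner_le_norm_sq_of_norm_eq_one (𝕜 := ℂ) hψ ((∑ i, A i) ψ)
  rw [re_to_complex, hexpect] at hcs
  rw [hexpect]
  exact le_one_add_sqrt_of_sq_le_add (hcs.trans hnorm)

/-- Key technical lemma (Lemma 4 / `orthogonality-implies-soundness`): if the pairwise
anticommutators of projectors are small on a unit vector `ψ`, then the sum of the
projectors has expectation at most `1 + sqrt (∑_{i<j} δ_{ij})`. -/
theorem stmt0 {V : Type*} [NormedAddCommGroup V] [InnerProductSpace ℂ V] [CompleteSpace V]
    {m : ℕ} (A : Fin m → V →L[ℂ] V)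
    (hidem : ∀ i, A i ∘L A i = A i)
    (hsa : ∀ i, ContinuousLinearMap.adjoint (A i) = A i)
    (ψ : V) (hψ : ‖ψ‖ = 1)
    (δ : Fin m → Fin m → ℝ)
    (hδ : ∀ i j, i ≠ j → δ i j ∈ Set.Icc (0:ℝ) 2)
    (h : ∀ i j, i ≠ j → (⟪ψ, (A i ∘L A j + A j ∘L A i) ψ⟫_ℂ).re ≤ δ i j) :
    (⟪ψ, (∑ i, A i) ψ⟫_ℂ).re ≤
      1 + Real.sqrt (∑ i, ∑ j ∈ Finset.univ.filter (fun j => i < j), δ i j) :=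
  stmt0_general A hidem hsa ψ hψ δ h
end

section
/- Let Ω be a finite nonempty set with a probability mass function p (p(ω) ≥ 0 and Σ_ω p(ω) = 1). For each ω ∈ Ω let ψ_ω be a unit vector in a complex inner product space V and let A_{ω,1}, ..., A_{ω,m} be orthogonal projections on V. Suppose there are real numbers δ_{ij} ∈ [0,2] such that Σ_ω p(ω) · Re⟨ψ_ω, (A_{ω,i} A_{ω,j} + A_{ω,j} A_{ω,i}) ψ_ω⟩ ≤ δ_{ij} for all i ≠ j. Then Σ_ω p(ω) · Re⟨ψ_ω, (A_{ω,1} + ⋯ + A_{ω,m}) ψ_ω⟩ ≤ 1 + (Σ_{i<j} δ_{ij})^{1/2}. -/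
open scoped InnerProductSpace


lemma sum_split {m : ℕ} (f : Fin m → Fin m → ℝ) :
    ∑ i, ∑ j, f i j =
      (∑ i, f i i) + ∑ i, ∑ j ∈ Finset.univ.filter (fun j => i < j), (f i j + f j i) := by
  have h1 : ∀ i j : Fin m, f i j =
      (if i = j then f i j else 0) + (if i < j then f i j else 0) +
        (if j < i then f i j else 0) := by
    intro i j
    rcases lt_trichotomy i j with h | h | h
    · simp [h, h.ne, not_lt_of_gt h]
    · simp [h]
    · simp [h, h.ne', not_lt_of_gt h]
  have hswap : ∑ i, ∑ j, (if (j : Fin m) < i then f i j else 0) =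
      ∑ i, ∑ j, (if i < j then f j i else 0) := by
    rw [Finset.sum_comm]
  have hdiag : (∑ i, ∑ j, if i = j then f i j else 0) = ∑ i : Fin m, f i i := by
    simp [Finset.sum_ite_eq]
  calc ∑ i, ∑ j, f i j
      = ∑ i, ∑ j, ((if i = j then f i j else 0) + (if i < j then f i j else 0) +
        (if j < i then f i j else 0)) := by
        refine Finset.sum_congr rfl fun i _ => Finset.sum_congr rfl fun j _ => h1 i j
    _ = (∑ i, ∑ j, if i = j then f i j else 0) + ((∑ i, ∑ j, if i < j then f i j else 0)
        + (∑ i, ∑ j, if j < i then f i j else 0)) := by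
        simp [Finset.sum_add_distrib, add_assoc]
    _ = (∑ i, f i i) + ∑ i, ∑ j ∈ Finset.univ.filter (fun j => i < j), (f i j + f j i) := by
        rw [hswap, hdiag, ← Finset.sum_add_distrib]
        congr 1
        refine Finset.sum_congr rfl fun i _ => ?_
        rw [← Finset.sum_add_distrib]
        rw [Finset.sum_filter]
        refine Finset.sum_congr rfl fun j _ => ?_
        split_ifs <;> simp

lemma per_omega {V : Type*} [NormedAddCommGroup V] [InnerProductSpace ℂ V] [CompleteSpace V]
    {m : ℕ} (ψ : V) (hψ : ‖ψ‖ = 1) (A : Fin m → V →L[ℂ] V)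
    (hidem : ∀ i, A i ∘L A i = A i)
    (hsa : ∀ i, ContinuousLinearMap.adjoint (A i) = A i) :
    (0 ≤ (⟪ψ, (∑ i, A i) ψ⟫_ℂ).re) ∧
    ((⟪ψ, (∑ i, A i) ψ⟫_ℂ).re) ^ 2 ≤ (⟪ψ, (∑ i, A i) ψ⟫_ℂ).re +
      ∑ i, ∑ j ∈ Finset.univ.filter (fun j => i < j),
        (⟪ψ, (A i ∘L A j + A j ∘L A i) ψ⟫_ℂ).re := by
  set w : V := ∑ i, A i ψ with hw
  have happ : (∑ i, A i) ψ = w := by simp [hw, ContinuousLinearMap.sum_apply]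
  -- each term is a norm squared
  have hterm : ∀ i, (⟪ψ, A i ψ⟫_ℂ).re = ‖A i ψ‖ ^ 2 := by
    intro i
    have h2 : ⟪ψ, A i ψ⟫_ℂ = ⟪A i ψ, A i ψ⟫_ℂ := by
      conv_lhs => rw [← hidem i]
      rw [ContinuousLinearMap.comp_apply,
        ← ContinuousLinearMap.adjoint_inner_left (A i) (A i ψ) ψ, hsa]
    rw [h2, ← RCLike.re_to_complex, inner_self_eq_norm_sq]
  have hx : (⟪ψ, w⟫_ℂ).re = ∑ i, (⟪ψ, A i ψ⟫_ℂ).re := by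
    rw [hw, inner_sum, Complex.re_sum]
  have hxnn : 0 ≤ (⟪ψ, w⟫_ℂ).re := by
    rw [hx]; exact Finset.sum_nonneg fun i _ => by rw [hterm i]; positivity
  have hij : ∀ i j : Fin m, (⟪A i ψ, A j ψ⟫_ℂ) = ⟪ψ, (A i ∘L A j) ψ⟫_ℂ := by
    intro i j
    calc ⟪A i ψ, A j ψ⟫_ℂ = ⟪(ContinuousLinearMap.adjoint (A i)) ψ, A j ψ⟫_ℂ := by rw [hsa]
      _ = ⟪ψ, (A i ∘L A j) ψ⟫_ℂ := ContinuousLinearMap.adjoint_inner_left _ _ _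
  have hnorm : ‖w‖ ^ 2 = ∑ i, ∑ j, (⟪ψ, (A i ∘L A j) ψ⟫_ℂ).re := by
    rw [← inner_self_eq_norm_sq (𝕜 := ℂ), RCLike.re_to_complex, hw, sum_inner, Complex.re_sum]
    refine Finset.sum_congr rfl fun i _ => ?_
    rw [inner_sum, Complex.re_sum]
    exact Finset.sum_congr rfl fun j _ => by rw [hij]
  have hnorm' : ‖w‖ ^ 2 = (⟪ψ, w⟫_ℂ).re +
      ∑ i, ∑ j ∈ Finset.univ.filter (fun j => i < j),
        (⟪ψ, (A i ∘L A j + A j ∘L A i) ψ⟫_ℂ).re := by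
    rw [hnorm, sum_split (fun i j => (⟪ψ, (A i ∘L A j) ψ⟫_ℂ).re), hx]
    congr 1
    · exact Finset.sum_congr rfl fun i _ => by rw [hidem i]
    · refine Finset.sum_congr rfl fun i _ => Finset.sum_congr rfl fun j _ => ?_
      simp [ContinuousLinearMap.add_apply, inner_add_right]
  have hcs : (⟪ψ, w⟫_ℂ).re ≤ ‖w‖ := by
    have := re_inner_le_norm (𝕜 := ℂ) ψ w
    rwa [hψ, one_mul] at this
  have hsq : ((⟪ψ, w⟫_ℂ).re) ^ 2 ≤ ‖w‖ ^ 2 := by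
    have := pow_le_pow_left₀ hxnn hcs 2
    exact this
  rw [happ]
  exact ⟨hxnn, by rw [hnorm'] at hsq; exact hsq⟩

/-- Averaged version of the orthogonality-implies-soundness lemma: if the averaged
pairwise anticommutators are bounded by `δ_{ij}`, then the averaged expectation of the
sum of the projectors is at most `1 + sqrt (∑_{i<j} δ_{ij})`. -/
theorem stmt5 {Ω V : Type*} [Fintype Ω] [Nonempty Ω]
    [NormedAddCommGroup V] [InnerProductSpace ℂ V] [CompleteSpace V]
    (p : Ω → ℝ) (hp : ∀ ω, 0 ≤ p ω) (hp1 : ∑ ω, p ω = 1)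
    {m : ℕ} (ψ : Ω → V) (hψ : ∀ ω, ‖ψ ω‖ = 1)
    (A : Ω → Fin m → V →L[ℂ] V)
    (hidem : ∀ ω i, A ω i ∘L A ω i = A ω i)
    (hsa : ∀ ω i, ContinuousLinearMap.adjoint (A ω i) = A ω i)
    (δ : Fin m → Fin m → ℝ)
    (hδ : ∀ i j, i ≠ j → δ i j ∈ Set.Icc (0:ℝ) 2)
    (h : ∀ i j, i ≠ j →
      ∑ ω, p ω * (⟪ψ ω, (A ω i ∘L A ω j + A ω j ∘L A ω i) (ψ ω)⟫_ℂ).re ≤ δ i j) :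
    ∑ ω, p ω * (⟪ψ ω, (∑ i, A ω i) (ψ ω)⟫_ℂ).re ≤
      1 + Real.sqrt (∑ i, ∑ j ∈ Finset.univ.filter (fun j => i < j), δ i j) := by
  set x : Ω → ℝ := fun ω => (⟪ψ ω, (∑ i, A ω i) (ψ ω)⟫_ℂ).re with hxdef
  set c : Ω → ℝ := fun ω => ∑ i, ∑ j ∈ Finset.univ.filter (fun j => i < j),
    (⟪ψ ω, (A ω i ∘L A ω j + A ω j ∘L A ω i) (ψ ω)⟫_ℂ).re with hcdef
  set D : ℝ := ∑ i, ∑ j ∈ Finset.univ.filter (fun j => i < j), δ i j with hDdef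
  set E : ℝ := ∑ ω, p ω * x ω with hEdef
  have hper : ∀ ω, 0 ≤ x ω ∧ x ω ^ 2 ≤ x ω + c ω :=
    fun ω => per_omega (ψ ω) (hψ ω) (A ω) (hidem ω) (hsa ω)
  have hD0 : 0 ≤ D := by
    refine Finset.sum_nonneg fun i _ => Finset.sum_nonneg fun j hj => ?_
    have hij : i < j := (Finset.mem_filter.mp hj).2
    exact (hδ i j hij.ne).1
  -- averaged anticommutator bound
  have hpc : ∑ ω, p ω * c ω ≤ D := by
    have hswap : ∑ ω, p ω * c ω = ∑ i, ∑ j ∈ Finset.univ.filter (fun j => i < j),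
        ∑ ω, p ω * (⟪ψ ω, (A ω i ∘L A ω j + A ω j ∘L A ω i) (ψ ω)⟫_ℂ).re := by
      simp_rw [hcdef, Finset.mul_sum]
      rw [Finset.sum_comm]
      exact Finset.sum_congr rfl fun i _ => Finset.sum_comm
    rw [hswap, hDdef]
    refine Finset.sum_le_sum fun i _ => Finset.sum_le_sum fun j hj => ?_
    exact h i j ((Finset.mem_filter.mp hj).2).ne
  -- Jensen / Cauchy-Schwarz
  have hjensen : E ^ 2 ≤ ∑ ω, p ω * x ω ^ 2 := by
    have := Finset.sum_mul_sq_le_sq_mul_sq Finset.univ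
      (fun ω => Real.sqrt (p ω)) (fun ω => Real.sqrt (p ω) * x ω)
    have e1 : ∑ ω, Real.sqrt (p ω) * (Real.sqrt (p ω) * x ω) = E := by
      rw [hEdef]
      exact Finset.sum_congr rfl fun ω _ => by
        rw [← mul_assoc, Real.mul_self_sqrt (hp ω)]
    have e2 : ∑ ω, Real.sqrt (p ω) ^ 2 = 1 := by
      rw [← hp1]
      exact Finset.sum_congr rfl fun ω _ => Real.sq_sqrt (hp ω)
    have e3 : ∑ ω, (Real.sqrt (p ω) * x ω) ^ 2 = ∑ ω, p ω * x ω ^ 2 := by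
      exact Finset.sum_congr rfl fun ω _ => by rw [mul_pow, Real.sq_sqrt (hp ω)]
    rw [e1, e2, e3, one_mul] at this
    exact this
  have hEE : E ^ 2 ≤ E + D := by
    calc E ^ 2 ≤ ∑ ω, p ω * x ω ^ 2 := hjensen
      _ ≤ ∑ ω, p ω * (x ω + c ω) := Finset.sum_le_sum fun ω _ =>
          mul_le_mul_of_nonneg_left (hper ω).2 (hp ω)
      _ = E + ∑ ω, p ω * c ω := by
          rw [hEdef, ← Finset.sum_add_distrib]
          exact Finset.sum_congr rfl fun ω _ => mul_add _ _ _
      _ ≤ E + D := by linarith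
  nlinarith [Real.sq_sqrt hD0, Real.sqrt_nonneg D, hEE]
end

section
/- Let Ω be a finite nonempty set with a probability mass function p, let m ≥ 1 be a natural number, and let μ, δ ≥ 0 be real numbers. For each ω ∈ Ω let ψ_ω be a unit vector in a complex inner product space V and let A_{ω,1}, ..., A_{ω,m} be orthogonal projections on V. Suppose that for all i ≠ j, Σ_ω p(ω) · Re⟨ψ_ω, (A_{ω,i} A_{ω,j} + A_{ω,j} A_{ω,i}) ψ_ω⟩ ≤ 2√μ + δ. Then (1/m) · Σ_ω p(ω) · Σ_{c=1}^{m} Re⟨ψ_ω, A_{ω,c} ψ_ω⟩ ≤ 1/m + μ^{1/4} + δ^{1/2}. -/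
open scoped InnerProductSpace

lemma my_sqrt_add_le (a b : ℝ) (ha : 0 ≤ a) (hb : 0 ≤ b) :
    Real.sqrt (a + b) ≤ Real.sqrt a + Real.sqrt b := by
  have h1 : a + b ≤ (Real.sqrt a + Real.sqrt b) ^ 2 := by
    nlinarith [Real.sq_sqrt ha, Real.sq_sqrt hb, Real.sqrt_nonneg a, Real.sqrt_nonneg b]
  calc Real.sqrt (a + b) ≤ Real.sqrt ((Real.sqrt a + Real.sqrt b) ^ 2) := Real.sqrt_le_sqrt h1
    _ = Real.sqrt a + Real.sqrt b := Real.sqrt_sq (by positivity)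

set_option maxHeartbeats 1000000 in
/-- Abstract soundness bound for the parallel-repeated protocol: if each pair of distinct
challenge projectors has averaged anticommutator at most `2√μ + δ`, then the averaged
success probability `(1/m) ∑_ω p ω ∑_c Re⟨ψ_ω, A_{ω,c} ψ_ω⟩` is at most
`1/m + μ^{1/4} + δ^{1/2}`. -/
theorem stmt6 {Ω V : Type*} [Fintype Ω] [Nonempty Ω]
    [NormedAddCommGroup V] [InnerProductSpace ℂ V] [CompleteSpace V]
    (p : Ω → ℝ) (hp : ∀ ω, 0 ≤ p ω) (hp1 : ∑ ω, p ω = 1)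
    {m : ℕ} (hm : 1 ≤ m) (μ δ : ℝ) (hμ : 0 ≤ μ) (hδ : 0 ≤ δ)
    (ψ : Ω → V) (hψ : ∀ ω, ‖ψ ω‖ = 1)
    (A : Ω → Fin m → V →L[ℂ] V)
    (hidem : ∀ ω i, A ω i ∘L A ω i = A ω i)
    (hsa : ∀ ω i, ContinuousLinearMap.adjoint (A ω i) = A ω i)
    (h : ∀ i j, i ≠ j →
      ∑ ω, p ω * (⟪ψ ω, (A ω i ∘L A ω j + A ω j ∘L A ω i) (ψ ω)⟫_ℂ).re
        ≤ 2 * Real.sqrt μ + δ) :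
    (1 / (m : ℝ)) * ∑ ω, p ω * ∑ c, (⟪ψ ω, A ω c (ψ ω)⟫_ℂ).re ≤
      1 / (m : ℝ) + μ ^ ((1 : ℝ) / 4) + Real.sqrt δ := by

  have hm0 : (0:ℝ) < m := by exact_mod_cast hm
  set B : ℝ := 2 * Real.sqrt μ + δ with hBdef
  have hB0 : 0 ≤ B := by positivity
  set S : Ω → V := fun ω => ∑ c, A ω c (ψ ω) with hSdef
  -- each A ω c applied twice equals once
  have happ : ∀ ω c (x : V), A ω c (A ω c x) = A ω c x := by
    intro ω c x
    conv_rhs => rw [← hidem ω c]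
    rfl
  -- inner product identity: ⟪ψ, A_i (A_j ψ)⟫ = ⟪A_i ψ, A_j ψ⟫
  have hinner : ∀ ω (i j : Fin m),
      ⟪A ω i (ψ ω), A ω j (ψ ω)⟫_ℂ = ⟪ψ ω, A ω i (A ω j (ψ ω))⟫_ℂ := by
    intro ω i j
    conv_lhs => rw [← hsa ω i]
    rw [ContinuousLinearMap.adjoint_inner_left]
  -- pointwise: Re⟪ψ, A c ψ⟫ = ‖A c ψ‖²
  have hsq : ∀ ω c, (⟪ψ ω, A ω c (ψ ω)⟫_ℂ).re = ‖A ω c (ψ ω)‖^2 := by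
    intro ω c
    have h1 : ⟪ψ ω, A ω c (ψ ω)⟫_ℂ = ⟪A ω c (ψ ω), A ω c (ψ ω)⟫_ℂ := by
      rw [hinner ω c c, happ]
    rw [h1]
    simpa using inner_self_eq_norm_sq (𝕜 := ℂ) (x := A ω c (ψ ω))
  -- each term in [0,1]
  have hterm0 : ∀ ω c, 0 ≤ (⟪ψ ω, A ω c (ψ ω)⟫_ℂ).re := by
    intro ω c; rw [hsq]; positivity
  have hterm1 : ∀ ω c, (⟪ψ ω, A ω c (ψ ω)⟫_ℂ).re ≤ 1 := by
    intro ω c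
    have h2 : ‖⟪ψ ω, A ω c (ψ ω)⟫_ℂ‖ ≤ ‖ψ ω‖ * ‖A ω c (ψ ω)‖ := norm_inner_le_norm _ _
    have h3 : (⟪ψ ω, A ω c (ψ ω)⟫_ℂ).re ≤ ‖⟪ψ ω, A ω c (ψ ω)⟫_ℂ‖ := Complex.re_le_norm _
    have h4 := hsq ω c
    rw [hψ ω, one_mul] at h2
    nlinarith [norm_nonneg (A ω c (ψ ω)), sq_nonneg (‖A ω c (ψ ω)‖ - 1)]
  set X : ℝ := ∑ ω, p ω * ∑ c, (⟪ψ ω, A ω c (ψ ω)⟫_ℂ).re with hXdef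
  have hX0 : 0 ≤ X := by
    apply Finset.sum_nonneg; intro ω _
    exact mul_nonneg (hp ω) (Finset.sum_nonneg fun c _ => hterm0 ω c)
  -- norm-squared expansion
  have expand : ∀ ω, ‖S ω‖^2 = (∑ c, (⟪ψ ω, A ω c (ψ ω)⟫_ℂ).re)
      + ∑ i, ∑ j ∈ Finset.univ.erase i, (⟪ψ ω, A ω i (A ω j (ψ ω))⟫_ℂ).re := by
    intro ω
    have h1 : (‖S ω‖^2 : ℝ) = (⟪S ω, S ω⟫_ℂ).re := by
      symm; simpa using inner_self_eq_norm_sq (𝕜 := ℂ) (x := S ω)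
    rw [h1, hSdef]
    simp only [sum_inner, inner_sum, Complex.re_sum]
    rw [Finset.sum_comm]
    have h2 : ∀ i : Fin m, ∑ j, (⟪A ω i (ψ ω), A ω j (ψ ω)⟫_ℂ).re
        = (⟪ψ ω, A ω i (ψ ω)⟫_ℂ).re
          + ∑ j ∈ Finset.univ.erase i, (⟪ψ ω, A ω i (A ω j (ψ ω))⟫_ℂ).re := by
      intro i
      rw [← Finset.sum_erase_add _ _ (Finset.mem_univ i)]
      rw [hinner ω i i, happ]
      rw [add_comm]
      congr 1
      exact Finset.sum_congr rfl fun j _ => by rw [hinner]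
    rw [Finset.sum_congr rfl fun i _ => h2 i, Finset.sum_add_distrib]
  -- cross-term sum bound
  have TsymB : ∀ i j : Fin m, i ≠ j →
      (∑ ω, p ω * (⟪ψ ω, A ω i (A ω j (ψ ω))⟫_ℂ).re)
      + (∑ ω, p ω * (⟪ψ ω, A ω j (A ω i (ψ ω))⟫_ℂ).re) ≤ B := by
    intro i j hij
    have := h i j hij
    rw [← Finset.sum_add_distrib] at *
    calc ∑ ω, (p ω * (⟪ψ ω, A ω i (A ω j (ψ ω))⟫_ℂ).re
            + p ω * (⟪ψ ω, A ω j (A ω i (ψ ω))⟫_ℂ).re)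
        = ∑ ω, p ω * (⟪ψ ω, (A ω i ∘L A ω j + A ω j ∘L A ω i) (ψ ω)⟫_ℂ).re := by
          refine Finset.sum_congr rfl fun ω _ => ?_
          rw [ContinuousLinearMap.add_apply, inner_add_right, Complex.add_re]
          ring_nf
          rfl
      _ ≤ B := this
  set T : Fin m → Fin m → ℝ :=
    fun i j => ∑ ω, p ω * (⟪ψ ω, A ω i (A ω j (ψ ω))⟫_ℂ).re with hTdef
  have hTswap : ∑ i, ∑ j ∈ Finset.univ.erase i, T i j
      = ∑ i, ∑ j ∈ Finset.univ.erase i, T j i := by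
    rw [Finset.sum_comm' (t' := Finset.univ) (s' := fun j => Finset.univ.erase j)
      (fun x y => by simp [ne_comm, eq_comm])]
  have crossT : ∑ i, ∑ j ∈ Finset.univ.erase i, T i j ≤ (m:ℝ)^2 * B / 2 := by
    have h2 : 2 * (∑ i, ∑ j ∈ Finset.univ.erase i, T i j)
        = ∑ i, ∑ j ∈ Finset.univ.erase i, (T i j + T j i) := by
      rw [two_mul]
      nth_rewrite 2 [hTswap]
      rw [← Finset.sum_add_distrib]
      exact Finset.sum_congr rfl fun i _ => (Finset.sum_add_distrib).symm
    have h3 : ∑ i, ∑ j ∈ Finset.univ.erase i, (T i j + T j i)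
        ≤ ∑ i : Fin m, ∑ j ∈ Finset.univ.erase i, B := by
      refine Finset.sum_le_sum fun i _ => Finset.sum_le_sum fun j hj => ?_
      exact TsymB i j (Ne.symm (Finset.mem_erase.1 hj).1)
    have h4 : ∑ i : Fin m, ∑ j ∈ Finset.univ.erase i, B ≤ (m:ℝ)^2 * B := by
      simp only [Finset.sum_const, nsmul_eq_mul, Finset.card_erase_of_mem (Finset.mem_univ _),
        Finset.card_univ, Fintype.card_fin]
      have : ((m - 1 : ℕ) : ℝ) ≤ (m:ℝ) := by
        have := Nat.sub_le m 1; exact_mod_cast this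
      have h5 : ((m - 1 : ℕ):ℝ) * B ≤ (m:ℝ) * B := mul_le_mul_of_nonneg_right this hB0
      have h6 := mul_le_mul_of_nonneg_left h5 (le_of_lt hm0)
      nlinarith [h6]
    have h23 := h3.trans h4
    rw [← h2] at h23
    have h24 : 2 * (∑ i, ∑ j ∈ Finset.univ.erase i, T i j) ≤ (m:ℝ)^2 * B := h23
    calc ∑ i, ∑ j ∈ Finset.univ.erase i, T i j
        = 2 * (∑ i, ∑ j ∈ Finset.univ.erase i, T i j) / 2 := by ring
      _ ≤ (m:ℝ)^2 * B / 2 := by gcongr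
  -- expected cross term
  have crossE : ∑ ω, p ω * (∑ i, ∑ j ∈ Finset.univ.erase i,
      (⟪ψ ω, A ω i (A ω j (ψ ω))⟫_ℂ).re) ≤ (m:ℝ)^2 * B / 2 := by
    calc ∑ ω, p ω * (∑ i, ∑ j ∈ Finset.univ.erase i, (⟪ψ ω, A ω i (A ω j (ψ ω))⟫_ℂ).re)
        = ∑ i, ∑ j ∈ Finset.univ.erase i, T i j := by
          simp only [Finset.mul_sum]
          rw [Finset.sum_comm]
          exact Finset.sum_congr rfl fun i _ => Finset.sum_comm
      _ ≤ (m:ℝ)^2 * B / 2 := crossT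
  -- E ‖S‖² ≤ X + m²B/2
  have ES2 : ∑ ω, p ω * ‖S ω‖^2 ≤ X + (m:ℝ)^2 * B / 2 := by
    have : ∑ ω, p ω * ‖S ω‖^2
        = X + ∑ ω, p ω * (∑ i, ∑ j ∈ Finset.univ.erase i,
          (⟪ψ ω, A ω i (A ω j (ψ ω))⟫_ℂ).re) := by
      rw [hXdef, ← Finset.sum_add_distrib]
      exact Finset.sum_congr rfl fun ω _ => by rw [expand ω, mul_add]
    rw [this]
    linarith [crossE]
  -- X ≤ E‖S‖ via Cauchy-Schwarz on inner, then Jensen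
  have hXES : X ≤ ∑ ω, p ω * ‖S ω‖ := by
    refine Finset.sum_le_sum fun ω _ => ?_
    refine mul_le_mul_of_nonneg_left ?_ (hp ω)
    have h1 : ∑ c, (⟪ψ ω, A ω c (ψ ω)⟫_ℂ).re = (⟪ψ ω, S ω⟫_ℂ).re := by
      rw [hSdef]; simp [inner_sum, Complex.re_sum]
    rw [h1]
    calc (⟪ψ ω, S ω⟫_ℂ).re ≤ ‖⟪ψ ω, S ω⟫_ℂ‖ := Complex.re_le_norm _
      _ ≤ ‖ψ ω‖ * ‖S ω‖ := norm_inner_le_norm _ _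
      _ = ‖S ω‖ := by rw [hψ ω, one_mul]
  have jensen : (∑ ω, p ω * ‖S ω‖)^2 ≤ ∑ ω, p ω * ‖S ω‖^2 := by
    have := Finset.sum_mul_sq_le_sq_mul_sq Finset.univ
      (fun ω => Real.sqrt (p ω)) (fun ω => Real.sqrt (p ω) * ‖S ω‖)
    have e1 : ∀ ω : Ω, Real.sqrt (p ω) * (Real.sqrt (p ω) * ‖S ω‖) = p ω * ‖S ω‖ := by
      intro ω; rw [← mul_assoc, Real.mul_self_sqrt (hp ω)]
    have e2 : ∀ ω : Ω, (Real.sqrt (p ω))^2 = p ω := fun ω => Real.sq_sqrt (hp ω)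
    have e3 : ∀ ω : Ω, (Real.sqrt (p ω) * ‖S ω‖)^2 = p ω * ‖S ω‖^2 := by
      intro ω; rw [mul_pow, e2]
    simp only [e1, e2, e3] at this
    simpa [hp1] using this
  -- conclude X² ≤ X + m²B/2
  have hXsq : X^2 ≤ X + (m:ℝ)^2 * B / 2 := by
    have h1 : X^2 ≤ (∑ ω, p ω * ‖S ω‖)^2 := by
      apply sq_le_sq' <;> nlinarith [hXES, hX0]
    linarith [jensen, ES2]
  set t : ℝ := (m:ℝ) * Real.sqrt (B / 2) with htdef
  have ht0 : 0 ≤ t := by positivity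
  have ht2 : t^2 = (m:ℝ)^2 * B / 2 := by
    rw [htdef, mul_pow, Real.sq_sqrt (by positivity)]; ring
  have hX1 : X ≤ 1 + t := by
    clear_value X t S T
    by_contra hc
    push_neg at hc
    nlinarith [mul_pos (by linarith : (0:ℝ) < X - 1 - t) (by linarith : (0:ℝ) < X + t)]
  -- final arithmetic
  have hsB : Real.sqrt (B / 2) ≤ μ ^ ((1:ℝ)/4) + Real.sqrt δ := by
    have e1 : B / 2 = Real.sqrt μ + δ / 2 := by rw [hBdef]; ring
    rw [e1]
    calc Real.sqrt (Real.sqrt μ + δ / 2)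
        ≤ Real.sqrt (Real.sqrt μ) + Real.sqrt (δ / 2) :=
          my_sqrt_add_le _ _ (Real.sqrt_nonneg μ) (by linarith)
      _ ≤ μ ^ ((1:ℝ)/4) + Real.sqrt δ := by
          have e2 : Real.sqrt (Real.sqrt μ) = μ ^ ((1:ℝ)/4) := by
            rw [Real.sqrt_eq_rpow, Real.sqrt_eq_rpow, ← Real.rpow_mul hμ]
            norm_num
          rw [e2]
          exact add_le_add le_rfl (Real.sqrt_le_sqrt (by linarith))
  calc (1 / (m:ℝ)) * X ≤ (1 / (m:ℝ)) * (1 + t) := by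
        apply mul_le_mul_of_nonneg_left hX1 (by positivity)
    _ = 1 / (m:ℝ) + Real.sqrt (B / 2) := by
        rw [htdef]; field_simp
    _ ≤ 1 / (m:ℝ) + (μ ^ ((1:ℝ)/4) + Real.sqrt δ) := by linarith
    _ = 1 / (m:ℝ) + μ ^ ((1:ℝ)/4) + Real.sqrt δ := by ring
end
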